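/- arXiv:1707.05384 — 2 statements merged into one kernel-verified Lean document; each statement's English description precedes it below -/
import Mathlib

section
/- If ℓ is a chord of arclength t ≥ 1/3 (with t ≤ 1/2), then the length of σ_2(ℓ) is at most the length of ℓ; if t < 1/3 and t > 0, then the length of σ_2(ℓ) is strictly greater than t. Consequently, any σ_2-invariant geodesic lamination containing a non-degenerate leaf contains a leaf of length at least 1/3. -/
/-- `x` lies in the open positively oriented arc from `a` to `b` on `ℝ/ℤ`. -/
def inOpenArc (a b x : AddCircle (1 : ℝ)) : Prop :=
  ∃ u v : ℝ, 0 < u ∧ u < v ∧ v < 1 ∧ b = a + ((v : ℝ) : AddCircle (1 : ℝ)) ∧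
    x = a + ((u : ℝ) : AddCircle (1 : ℝ))

/-- Two chords `ab` and `cd` are linked iff exactly one of `c`, `d` lies in the
open arc `(a,b)`. -/
def Linked (a b c d : AddCircle (1 : ℝ)) : Prop :=
  Xor' (inOpenArc a b c) (inOpenArc a b d)

/-- A (sibling) σ₂-invariant geodesic lamination, leaves encoded as symmetric
pairs of endpoints. -/
structure InvLam where
  leaves : Set (AddCircle (1 : ℝ) × AddCircle (1 : ℝ))
  symm : ∀ a b, (a, b) ∈ leaves → (b, a) ∈ leaves
  degenerate : ∀ a, (a, a) ∈ leaves
  closed : IsClosed leaves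
  unlinked : ∀ a b c d, (a, b) ∈ leaves → (c, d) ∈ leaves → ¬ Linked a b c d
  forward : ∀ a b, (a, b) ∈ leaves → (2 • a, 2 • b) ∈ leaves
  backward : ∀ a b, (a, b) ∈ leaves → ∃ a' b', (a', b') ∈ leaves ∧ 2 • a' = a ∧ 2 • b' = b

/-!
On `ℝ/ℤ` the doubling map acts on chord lengths by `t ↦ min (2t) (1 - 2t)`: a short chord doubles,
a long one is folded back. Both inequalities are read off this formula. If every leaf of an
invariant lamination were shorter than `1/3`, the image of every leaf would therefore be exactly
twice as long, so the forward images of a non-degenerate leaf of length `t` would have lengths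
`2ⁿ t`, which is unbounded.
-/

namespace AddCircle

variable {p : ℝ}

theorem norm_coe_eq_min_of_abs_le (hp : 0 < p) {u : ℝ} (hu : |u| ≤ p) :
    ‖(u : AddCircle p)‖ = min |u| (p - |u|) := by
  wlog hu₀ : 0 ≤ u generalizing u
  · simpa [coe_neg, norm_neg, abs_neg] using this (u := -u) (by rwa [abs_neg]) (by linarith)
  rw [abs_of_nonneg hu₀] at hu ⊢
  rcases le_total u (p / 2) with h | h
  · rw [(norm_coe_eq_abs_iff p hp.ne').2 (by rwa [abs_of_pos hp, abs_of_nonneg hu₀]),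
      abs_of_nonneg hu₀, min_eq_left (by linarith)]
  · have hcoe : (u : AddCircle p) = ((u - p : ℝ) : AddCircle p) := by
      rw [coe_sub, coe_period, sub_zero]
    have habs : |u - p| = p - u := by rw [abs_of_nonpos (by linarith)]; ring
    rw [hcoe, (norm_coe_eq_abs_iff p hp.ne').2 (by rw [habs, abs_of_pos hp]; linarith), habs,
      min_eq_right (by linarith)]

theorem exists_coe_eq_and_norm_eq_abs (x : AddCircle p) :
    ∃ s : ℝ, (s : AddCircle p) = x ∧ ‖x‖ = |s| := by
  induction x using QuotientAddGroup.induction_on with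
  | H r =>
    refine ⟨r - round (p⁻¹ * r) * p, ?_, norm_eq p⟩
    rw [coe_sub, sub_eq_self, coe_eq_zero_iff]
    exact ⟨round (p⁻¹ * r), zsmul_eq_mul _ _⟩

theorem norm_two_nsmul (hp : 0 < p) (x : AddCircle p) :
    ‖2 • x‖ = min (2 * ‖x‖) (p - 2 * ‖x‖) := by
  obtain ⟨s, rfl, hs⟩ := exists_coe_eq_and_norm_eq_abs x
  have hs' : |s| ≤ p / 2 := by
    have := norm_le_half_period p hp.ne' (x := (s : AddCircle p))
    rwa [hs, abs_of_pos hp] at this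
  have h2s : |2 * s| = 2 * |s| := by rw [abs_mul, abs_two]
  rw [← coe_nsmul, nsmul_eq_mul, Nat.cast_two, hs, ← h2s]
  exact norm_coe_eq_min_of_abs_le hp (by linarith)

theorem dist_two_nsmul (hp : 0 < p) (a b : AddCircle p) :
    dist (2 • a) (2 • b) = min (2 * dist a b) (p - 2 * dist a b) := by
  rw [dist_eq_norm, dist_eq_norm, ← smul_sub, norm_two_nsmul hp]

end AddCircle

section UnitCircle

variable {a b : AddCircle (1 : ℝ)}

theorem dist_two_nsmul_le_of_one_third_le (h : 1 / 3 ≤ dist a b) :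
    dist (2 • a) (2 • b) ≤ dist a b := by
  rw [AddCircle.dist_two_nsmul one_pos]
  exact (min_le_right _ _).trans (by linarith)

theorem dist_lt_dist_two_nsmul_of_lt_one_third (h₀ : 0 < dist a b) (h : dist a b < 1 / 3) :
    dist a b < dist (2 • a) (2 • b) := by
  rw [AddCircle.dist_two_nsmul one_pos]
  exact lt_min (by linarith) (by linarith)

theorem dist_two_nsmul_eq_two_mul_of_lt_one_third (h : dist a b ≤ 1 / 3)
    (h₂ : dist (2 • a) (2 • b) < 1 / 3) : dist (2 • a) (2 • b) = 2 * dist a b := by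
  rw [AddCircle.dist_two_nsmul one_pos] at h₂ ⊢
  refine min_eq_left ?_
  by_contra! hfold
  rw [min_eq_right hfold.le] at h₂
  linarith

end UnitCircle

namespace InvLam

variable (L : InvLam) {a b : AddCircle (1 : ℝ)}

theorem pow_two_nsmul_mem (h : (a, b) ∈ L.leaves) (n : ℕ) :
    ((2 ^ n) • a, (2 ^ n) • b) ∈ L.leaves := by
  induction n with
  | zero => simpa using h
  | succ n ih => simpa only [pow_succ, mul_nsmul] using L.forward _ _ ih

theorem exists_mem_leaves_one_third_le_dist (h : (a, b) ∈ L.leaves) (hne : a ≠ b) :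
    ∃ c d, (c, d) ∈ L.leaves ∧ 1 / 3 ≤ dist c d := by
  by_contra! hshort
  have hdouble (n : ℕ) : dist ((2 ^ n) • a) ((2 ^ n) • b) = 2 ^ n * dist a b := by
    induction n with
    | zero => simp
    | succ n ih =>
      have h₂ := hshort _ _ (L.pow_two_nsmul_mem h (n + 1))
      rw [pow_succ, mul_nsmul, mul_nsmul] at h₂ ⊢
      rw [dist_two_nsmul_eq_two_mul_of_lt_one_third (hshort _ _ (L.pow_two_nsmul_mem h n)).le h₂,
        ih]
      ring
  have hpos : 0 < dist a b := dist_pos.2 hne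
  obtain ⟨n, hn⟩ := pow_unbounded_of_one_lt (1 / (3 * dist a b)) one_lt_two
  have hlt := hshort _ _ (L.pow_two_nsmul_mem h n)
  rw [hdouble, ← lt_div_iff₀ hpos, div_div] at hlt
  exact lt_asymm hn hlt

end InvLam

/-- A chord of length `≥ 1/3` does not get longer under σ₂; a chord of
length `0 < t < 1/3` gets strictly longer. Consequently, any σ₂-invariant geodesic
lamination containing a non-degenerate leaf contains a leaf of length at least `1/3`. -/
theorem stmt4 :
    (∀ a b : AddCircle (1 : ℝ), 1/3 ≤ dist a b → dist (2 • a) (2 • b) ≤ dist a b) ∧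
    (∀ a b : AddCircle (1 : ℝ), 0 < dist a b → dist a b < 1/3 →
      dist a b < dist (2 • a) (2 • b)) ∧
    (∀ L : InvLam, (∃ a b, (a, b) ∈ L.leaves ∧ a ≠ b) →
      ∃ a b, (a, b) ∈ L.leaves ∧ 1/3 ≤ dist a b) :=
  ⟨fun _ _ => dist_two_nsmul_le_of_one_third_le,
    fun _ _ => dist_lt_dist_two_nsmul_of_lt_one_third,
    fun L ⟨_, _, h, hne⟩ => L.exists_mem_leaves_one_third_le_dist h hne⟩
end

section
/- Let G' ⊂ ℝ/ℤ be a closed set with σ_d^{m+k}(G') = σ_d^m(G') for some m ≥ 0, k ≥ 1, and let (a,b) be a complementary arc (hole) of G' such that each σ_d-iterate maps holes to holes or collapses them. Then the pair {a,b} is either eventually periodic under σ_d (there exist s ≥ 0, p ≥ 1 with σ_d^{s+p} agreeing with σ_d^s on {a,b} as a set) or eventually critical (σ_d^s(a) = σ_d^s(b) for some s ≥ 0). -/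
open Set AddCircle

/-- `(a,b)` is a hole of the closed set `K ⊆ ℝ/ℤ`: both endpoints lie in `K` and the
open arc `(a,b)` misses `K`. -/
def IsHole (K : Set (AddCircle (1 : ℝ))) (a b : AddCircle (1 : ℝ)) : Prop :=
  a ∈ K ∧ b ∈ K ∧ ∀ x, inOpenArc a b x → x ∉ K
noncomputable def alen (a b : AddCircle (1:ℝ)) : ℝ := ((AddCircle.equivIco 1 0 (b - a)) : ℝ)

lemma alen_mem (a b : AddCircle (1:ℝ)) : alen a b ∈ Ico (0:ℝ) 1 := by
  have := (AddCircle.equivIco 1 0 (b - a)).2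
  simpa [alen] using this

lemma coe_alen (a b : AddCircle (1:ℝ)) : ((alen a b : ℝ) : AddCircle (1:ℝ)) = b - a := by
  have := (AddCircle.equivIco (1:ℝ) 0).symm_apply_apply (b - a)
  exact this

lemma add_alen (a b : AddCircle (1:ℝ)) : a + ((alen a b : ℝ) : AddCircle (1:ℝ)) = b := by
  rw [coe_alen]; abel

lemma alen_unique {a b : AddCircle (1:ℝ)} {t : ℝ} (ht : t ∈ Ico (0:ℝ) 1)
    (h : a + ((t : ℝ) : AddCircle (1:ℝ)) = b) : alen a b = t := by
  have h2 : ((alen a b : ℝ) : AddCircle (1:ℝ)) = ((t : ℝ) : AddCircle (1:ℝ)) := by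
    rw [coe_alen, ← h]; abel
  have := AddCircle.coe_eq_coe_iff_of_mem_Ico (p := (1:ℝ)) (a := 0)
    (by simpa using alen_mem a b) (by simpa using ht) |>.mp h2
  exact this

lemma alen_eq_zero_iff {a b : AddCircle (1:ℝ)} : alen a b = 0 ↔ a = b := by
  constructor
  · intro h
    have := add_alen a b
    rw [h] at this
    have : b = a := by simpa using this.symm
    exact this.symm
  · intro h; subst h
    exact alen_unique (by constructor <;> norm_num) (by simp)

lemma alen_pos {a b : AddCircle (1:ℝ)} (h : a ≠ b) : 0 < alen a b :=
  lt_of_le_of_ne (alen_mem a b).1 (fun e => h (alen_eq_zero_iff.mp e.symm))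

lemma inOpenArc_iff {a b : AddCircle (1:ℝ)} (x : AddCircle (1:ℝ)) :
    inOpenArc a b x ↔ ∃ u : ℝ, 0 < u ∧ u < alen a b ∧ x = a + ((u:ℝ) : AddCircle (1:ℝ)) := by
  constructor
  · rintro ⟨u, v, hu, huv, hv1, hb, hx⟩
    have hv : alen a b = v := alen_unique ⟨le_of_lt (lt_trans hu huv), hv1⟩ hb.symm
    exact ⟨u, hu, hv ▸ huv, hx⟩
  · rintro ⟨u, hu, hul, hx⟩
    exact ⟨u, alen a b, hu, hul, (alen_mem a b).2, (add_alen a b).symm, hx⟩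

lemma hole_unique {K : Set (AddCircle (1:ℝ))} {a b b' : AddCircle (1:ℝ)}
    (h1 : IsHole K a b) (h2 : IsHole K a b') (hb : a ≠ b) (hb' : a ≠ b') : b = b' := by
  rcases lt_trichotomy (alen a b) (alen a b') with h | h | h
  · exact absurd h1.2.1 (h2.2.2 b ((inOpenArc_iff b).mpr
      ⟨alen a b, alen_pos hb, h, (add_alen a b).symm⟩))
  · rw [← add_alen a b, ← add_alen a b', h]
  · exact absurd h2.2.1 (h1.2.2 b' ((inOpenArc_iff b').mpr
      ⟨alen a b', alen_pos hb', h, (add_alen a b').symm⟩))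

lemma int_of_coe_eq_zero {t : ℝ} (h : ((t:ℝ) : AddCircle (1:ℝ)) = 0) : ∃ n : ℤ, (n : ℝ) = t := by
  rcases (AddCircle.coe_eq_zero_iff (1:ℝ)).mp h with ⟨n, hn⟩
  exact ⟨n, by simpa using hn⟩

noncomputable def arcSet (a b : AddCircle (1:ℝ)) : Set (AddCircle (1:ℝ)) :=
  (fun u : ℝ => a + ((u:ℝ) : AddCircle (1:ℝ))) '' Ioo 0 (alen a b)

lemma arcSet_eq (a b : AddCircle (1:ℝ)) {r : ℝ} (hr : ((r:ℝ) : AddCircle (1:ℝ)) = a) :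
    arcSet a b = ((↑·) : ℝ → AddCircle (1:ℝ)) '' Ioo r (r + alen a b) := by
  ext x
  constructor
  · rintro ⟨u, hu, rfl⟩
    exact ⟨r + u, ⟨by linarith [hu.1], by linarith [hu.2]⟩, by show ((r+u : ℝ) : AddCircle (1:ℝ)) = a + _; rw [← hr, ← AddCircle.coe_add]⟩
  · rintro ⟨y, hy, rfl⟩
    refine ⟨y - r, ⟨by linarith [hy.1], by linarith [hy.2]⟩, ?_⟩
    show a + _ = ((y:ℝ) : AddCircle (1:ℝ)); rw [← hr, ← AddCircle.coe_add]; norm_num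

lemma isOpen_arcSet (a b : AddCircle (1:ℝ)) : IsOpen (arcSet a b) := by
  obtain ⟨r, hr⟩ := Quotient.exists_rep a
  rw [arcSet_eq a b hr]
  exact QuotientAddGroup.isOpenMap_coe _ isOpen_Ioo

open MeasureTheory in
lemma volume_arcSet (a b : AddCircle (1:ℝ)) :
    volume (arcSet a b) = ENNReal.ofReal (alen a b) := by
  haveI : Fact ((0:ℝ) < 1) := ⟨one_pos⟩
  obtain ⟨r, hr⟩ := Quotient.exists_rep a
  have hr' : ((r:ℝ) : AddCircle (1:ℝ)) = a := hr
  set l := alen a b with hl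
  have hl0 : 0 ≤ l := (alen_mem a b).1
  have hl1 : l < 1 := (alen_mem a b).2
  have hmeas : MeasurableSet (arcSet a b) := (isOpen_arcSet a b).measurableSet
  rw [AddCircle.add_projection_respects_measure (T := (1:ℝ)) r hmeas]
  have hset : (QuotientAddGroup.mk ⁻¹' (arcSet a b)) ∩ Ioc r (r + 1) = Ioo r (r + l) := by
    ext x
    simp only [mem_inter_iff, mem_preimage, mem_Ioc, mem_Ioo]
    constructor
    · rintro ⟨hx, hx1, hx2⟩
      rw [arcSet_eq a b hr'] at hx
      rcases hx with ⟨y, hy, hyx⟩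
      have hyx' : ((y:ℝ) : AddCircle (1:ℝ)) = ((x:ℝ) : AddCircle (1:ℝ)) := hyx
      have : ((y - x : ℝ) : AddCircle (1:ℝ)) = 0 := by
        rw [AddCircle.coe_sub, hyx']; abel
      obtain ⟨n, hn⟩ := int_of_coe_eq_zero this
      have hn0 : n = 0 := by
        have h1 : (n:ℝ) < 1 := by rw [hn]; linarith [hy.2]
        have h2 : (-1:ℝ) < n := by rw [hn]; linarith [hy.1]
        have h1' : (n:ℤ) < 1 := by exact_mod_cast h1
        have h2' : (-1:ℤ) < n := by exact_mod_cast h2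
        omega
      have : y = x := by have : (0:ℝ) = y - x := by rw [← hn, hn0]; simp
                         linarith
      exact this ▸ hy
    · rintro ⟨hx1, hx2⟩
      refine ⟨?_, hx1, by linarith⟩
      rw [arcSet_eq a b hr']
      exact ⟨x, ⟨hx1, hx2⟩, rfl⟩
  rw [hset, Real.volume_Ioo]
  congr 1
  ring

lemma coe_one_eq_zero : (((1:ℝ) : AddCircle (1:ℝ))) = 0 := by
  simpa using (AddCircle.coe_period (p := (1:ℝ)))

lemma inOpenArc_iff_mem_arcSet {a b : AddCircle (1:ℝ)} (x : AddCircle (1:ℝ)) :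
    inOpenArc a b x ↔ x ∈ arcSet a b := by
  rw [inOpenArc_iff]
  constructor
  · rintro ⟨u, h1, h2, h3⟩; exact ⟨u, ⟨h1, h2⟩, h3.symm⟩
  · rintro ⟨u, ⟨h1, h2⟩, h3⟩; exact ⟨u, h1, h2, h3.symm⟩

lemma arcSet_disjoint {K : Set (AddCircle (1:ℝ))} {a b a' b' : AddCircle (1:ℝ)}
    (h1 : IsHole K a b) (h2 : IsHole K a' b') (hb : a ≠ b) (hb' : a' ≠ b')
    (haa : a ≠ a') : Disjoint (arcSet a b) (arcSet a' b') := by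
  rw [Set.disjoint_left]
  rintro x hx hx'
  obtain ⟨u, ⟨hu0, hul⟩, rfl⟩ := hx
  obtain ⟨u', ⟨hu0', hul'⟩, hx⟩ := hx'
  have hxx : a' + ((u':ℝ) : AddCircle (1:ℝ)) = a + ((u:ℝ) : AddCircle (1:ℝ)) := hx
  set w := alen a a' with hwdef
  have hw0 : 0 < w := alen_pos haa
  have hw1 : w < 1 := (alen_mem a a').2
  have ha' : a + ((w:ℝ) : AddCircle (1:ℝ)) = a' := add_alen a a'
  have hz : ((w + u' - u : ℝ) : AddCircle (1:ℝ)) = 0 := by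
    have h2 : ((w:ℝ) : AddCircle (1:ℝ)) + ((u':ℝ) : AddCircle (1:ℝ))
        = ((u:ℝ) : AddCircle (1:ℝ)) := by
      apply add_left_cancel (a := a)
      rw [← add_assoc, ha']; exact hxx
    rw [AddCircle.coe_sub, AddCircle.coe_add, h2]; abel
  obtain ⟨n, hn⟩ := int_of_coe_eq_zero hz
  have hl1 : alen a b < 1 := (alen_mem a b).2
  have hl1' : alen a' b' < 1 := (alen_mem a' b').2
  have hcase : n = 0 ∨ n = 1 := by
    have hlow : (-1:ℝ) < n := by rw [hn]; linarith
    have hhigh : (n:ℝ) < 2 := by rw [hn]; linarith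
    have h1' : (-1:ℤ) < n := by exact_mod_cast hlow
    have h2' : (n:ℤ) < 2 := by exact_mod_cast hhigh
    omega
  rcases hcase with rfl | rfl
  · -- w + u' = u, so w < u < alen a b, hence a' ∈ open arc (a,b)
    have hwu : w + u' - u = 0 := by rw [← hn]; simp
    have harc : inOpenArc a b a' := (inOpenArc_iff a').mpr
      ⟨w, hw0, by linarith, ha'.symm⟩
    exact h1.2.2 a' harc h2.1
  · -- w + u' - u = 1, so a = a' + (1-w) with 0 < 1-w < u' < alen a' b'
    have hwu : w + u' - u = 1 := by rw [← hn]; simp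
    have hwa : alen a' a = 1 - w := by
      refine alen_unique ⟨by linarith, by linarith⟩ ?_
      calc a' + ((1 - w : ℝ) : AddCircle (1:ℝ))
          = a + ((w:ℝ) : AddCircle (1:ℝ)) + ((1 - w : ℝ) : AddCircle (1:ℝ)) := by rw [ha']
        _ = a + (((w + (1 - w) : ℝ)) : AddCircle (1:ℝ)) := by
            rw [add_assoc, ← AddCircle.coe_add]
        _ = a := by norm_num [coe_one_eq_zero]
    have hlt : 1 - w < alen a' b' := by linarith
    have harc : inOpenArc a' b' a := (inOpenArc_iff a).mpr
      ⟨1 - w, by linarith, hlt, by rw [← hwa]; exact (add_alen a' a).symm⟩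
    exact h2.2.2 a harc h1.1

lemma coe_real_smul (d : ℕ) (t : ℝ) :
    (d : ℕ) • ((t:ℝ) : AddCircle (1:ℝ)) = (((d * t : ℝ)) : AddCircle (1:ℝ)) := by
  rw [← AddCircle.coe_nsmul]
  norm_num [nsmul_eq_mul]

lemma alen_smul {d : ℕ} (hd : 1 ≤ d) {x y : AddCircle (1:ℝ)}
    (h : alen x y < 1 / d) : alen ((d:ℕ) • x) ((d:ℕ) • y) = d * alen x y := by
  have hd0 : (0:ℝ) < d := by exact_mod_cast hd
  refine alen_unique ⟨mul_nonneg hd0.le (alen_mem x y).1, ?_⟩ ?_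
  · calc (d:ℝ) * alen x y < d * (1/d) := by
          apply mul_lt_mul_of_pos_left h hd0
      _ = 1 := by field_simp
  · rw [← coe_real_smul]
    have hxy : x + ((alen x y : ℝ) : AddCircle (1:ℝ)) = y := add_alen x y
    calc (d:ℕ) • x + (d:ℕ) • ((alen x y : ℝ) : AddCircle (1:ℝ))
        = (d:ℕ) • (x + ((alen x y : ℝ) : AddCircle (1:ℝ))) := (smul_add _ _ _).symm
      _ = (d:ℕ) • y := by rw [hxy]

open MeasureTheory ENNReal in
lemma holes_finite {d : ℕ} (hd : 2 ≤ d) (K : Set (AddCircle (1:ℝ))) :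
    {x : AddCircle (1:ℝ) | ∃ y, IsHole K x y ∧ x ≠ y ∧ 1/(d:ℝ) ≤ alen x y}.Finite := by
  by_contra hinf
  have hinf' : {x : AddCircle (1:ℝ) | ∃ y, IsHole K x y ∧ x ≠ y ∧ 1/(d:ℝ) ≤ alen x y}.Infinite := hinf
  obtain ⟨T, hT, hcard⟩ := hinf'.exists_subset_card_eq (d+1)
  have hchoice : ∀ x ∈ (↑T : Set (AddCircle (1:ℝ))),
      ∃ y, IsHole K x y ∧ x ≠ y ∧ 1/(d:ℝ) ≤ alen x y := fun x hx => hT hx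
  choose! g hg using hchoice
  have hmeas : ∀ i ∈ T, NullMeasurableSet (arcSet i (g i)) volume :=
    fun i _ => (isOpen_arcSet _ _).measurableSet.nullMeasurableSet
  have hdisj : Set.Pairwise (↑T) (Function.onFun (MeasureTheory.AEDisjoint volume)
      (fun x => arcSet x (g x))) := by
    intro x hx y hy hxy
    exact Disjoint.aedisjoint
      (arcSet_disjoint (hg x hx).1 (hg y hy).1 (hg x hx).2.1 (hg y hy).2.1 hxy)
  have hsum := MeasureTheory.sum_measure_le_measure_univ hmeas hdisj
  rw [AddCircle.measure_univ] at hsum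
  have hlow : ∀ i ∈ T, ENNReal.ofReal (1/(d:ℝ)) ≤ volume (arcSet i (g i)) := by
    intro i hi
    rw [volume_arcSet]
    exact ENNReal.ofReal_le_ofReal (hg i hi).2.2
  have hge : (T.card : ℝ≥0∞) * ENNReal.ofReal (1/(d:ℝ)) ≤ ∑ i ∈ T, volume (arcSet i (g i)) := by
    calc (T.card : ℝ≥0∞) * ENNReal.ofReal (1/(d:ℝ))
        = ∑ _i ∈ T, ENNReal.ofReal (1/(d:ℝ)) := by rw [Finset.sum_const, nsmul_eq_mul]
      _ ≤ _ := Finset.sum_le_sum hlow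
  have hfinal : ((d:ℝ≥0∞) + 1) * ENNReal.ofReal (1/(d:ℝ)) ≤ ENNReal.ofReal 1 := by
    rw [hcard] at hge
    push_cast at hge ⊢
    exact le_trans hge hsum
  have hd0 : (0:ℝ) < d := by positivity
  rw [show ((d:ℝ≥0∞) + 1) = ENNReal.ofReal ((d:ℝ) + 1) by
        rw [ENNReal.ofReal_add (by positivity) zero_le_one]; simp,
      ← ENNReal.ofReal_mul (by positivity)] at hfinal
  have : ((d:ℝ) + 1) * (1/(d:ℝ)) ≤ 1 :=
    (ENNReal.ofReal_le_ofReal_iff zero_le_one).mp hfinal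
  have : (d:ℝ) + 1 ≤ d := by
    have h1 : ((d:ℝ) + 1) * (1/(d:ℝ)) = ((d:ℝ)+1) / d := by ring
    rw [h1, div_le_one hd0] at this
    linarith
  linarith

/-- Every edge of a (pre)periodic gap is (pre)periodic or (pre)critical.
If `G'` is closed with `σ_d^{m+k}(G') = σ_d^m(G')`, and `(a,b)` is a hole of `G'` whose
iterated images are holes of the image sets or collapse, then the pair `{a,b}` is
eventually periodic under `σ_d` or eventually critical. -/
theorem stmt14 (d : ℕ) (hd : 2 ≤ d) (G' : Set (AddCircle (1 : ℝ))) (hG : IsClosed G')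
    (m k : ℕ) (hk : 1 ≤ k)
    (hper : (fun x : AddCircle (1 : ℝ) => d • x)^[m + k] '' G' =
      (fun x : AddCircle (1 : ℝ) => d • x)^[m] '' G')
    (a b : AddCircle (1 : ℝ)) (hab : a ≠ b) (hhole : IsHole G' a b)
    (hholes : ∀ s : ℕ,
      (fun x : AddCircle (1 : ℝ) => d • x)^[s] a = (fun x : AddCircle (1 : ℝ) => d • x)^[s] b ∨
      IsHole ((fun x : AddCircle (1 : ℝ) => d • x)^[s] '' G')
        ((fun x : AddCircle (1 : ℝ) => d • x)^[s] a)
        ((fun x : AddCircle (1 : ℝ) => d • x)^[s] b)) :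
    (∃ s p : ℕ, 1 ≤ p ∧
      ({(fun x : AddCircle (1 : ℝ) => d • x)^[s + p] a,
        (fun x : AddCircle (1 : ℝ) => d • x)^[s + p] b} : Set (AddCircle (1 : ℝ))) =
      {(fun x : AddCircle (1 : ℝ) => d • x)^[s] a,
        (fun x : AddCircle (1 : ℝ) => d • x)^[s] b}) ∨
    (∃ s : ℕ, (fun x : AddCircle (1 : ℝ) => d • x)^[s] a =
      (fun x : AddCircle (1 : ℝ) => d • x)^[s] b) := by
  set f : AddCircle (1:ℝ) → AddCircle (1:ℝ) := fun x => d • x with hf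
  by_cases hcrit : ∃ s : ℕ, f^[s] a = f^[s] b
  · exact Or.inr hcrit
  push_neg at hcrit
  left
  set A : ℕ → AddCircle (1:ℝ) := fun s => f^[s] a with hA
  set B : ℕ → AddCircle (1:ℝ) := fun s => f^[s] b with hB
  set K : ℕ → Set (AddCircle (1:ℝ)) := fun s => f^[s] '' G' with hK
  set L : ℕ → ℝ := fun s => alen (A s) (B s) with hL
  have hne : ∀ s, A s ≠ B s := hcrit
  have hhole' : ∀ s, IsHole (K s) (A s) (B s) := fun s => (hholes s).resolve_left (hne s)
  have hLpos : ∀ s, 0 < L s := fun s => alen_pos (hne s)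
  have hL1 : ∀ s, L s < 1 := fun s => (alen_mem (A s) (B s)).2
  have hd1 : (1:ℝ) < d := by exact_mod_cast lt_of_lt_of_le one_lt_two (by exact_mod_cast hd)
  have hd0 : (0:ℝ) < d := lt_trans zero_lt_one hd1
  -- expansion step
  have hstep : ∀ s, L s < 1 / d → L (s+1) = d * L s := by
    intro s hs
    have hAs : A (s+1) = d • A s := by
      show f^[s+1] a = d • f^[s] a
      rw [Function.iterate_succ_apply' f s a]
    have hBs : B (s+1) = d • B s := by
      show f^[s+1] b = d • f^[s] b
      rw [Function.iterate_succ_apply' f s b]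
    show alen (A (s+1)) (B (s+1)) = d * L s
    rw [hAs, hBs]
    exact alen_smul (le_trans one_le_two hd) hs
  -- lengths eventually reach 1/d
  have hgrow : ∀ n, ∃ t, n ≤ t ∧ 1 / (d:ℝ) ≤ L t := by
    intro n
    by_contra hcon
    push_neg at hcon
    have hpow : ∀ j, L (n + j) = d ^ j * L n := by
      intro j
      induction j with
      | zero => simp
      | succ j ih =>
        have h1 : L (n + j) < 1 / d := hcon (n + j) (Nat.le_add_right n j)
        have := hstep (n + j) h1
        rw [show n + (j+1) = (n + j) + 1 from rfl, this, ih]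
        ring
    obtain ⟨j, hj⟩ := pow_unbounded_of_one_lt (1 / L n) hd1
    have h1 : (1:ℝ) < L (n + j) := by
      rw [hpow j]
      calc (1:ℝ) = (1 / L n) * L n := (one_div_mul_cancel (hLpos n).ne').symm
        _ < d ^ j * L n := by
          apply mul_lt_mul_of_pos_right hj (hLpos n)
    linarith [hL1 (n + j)]
  -- the set of big times is infinite
  have hSinf : {t : ℕ | m ≤ t ∧ 1 / (d:ℝ) ≤ L t}.Infinite := by
    apply Set.infinite_of_not_bddAbove
    rw [not_bddAbove_iff]
    intro x
    obtain ⟨t, ht1, ht2⟩ := hgrow (max m (x+1))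
    exact ⟨t, ⟨le_trans (le_max_left _ _) ht1, ht2⟩,
      lt_of_lt_of_le (Nat.lt_succ_self x) (le_trans (le_max_right _ _) ht1)⟩
  -- a residue with infinitely many big times
  obtain ⟨r, hrk, hTinf⟩ : ∃ r, r < k ∧
      {t : ℕ | (m ≤ t ∧ 1 / (d:ℝ) ≤ L t) ∧ (t - m) % k = r}.Infinite := by
    by_contra hcon
    push_neg at hcon
    apply hSinf
    have hsub : {t : ℕ | m ≤ t ∧ 1 / (d:ℝ) ≤ L t} ⊆
        ⋃ r ∈ Finset.range k, {t : ℕ | (m ≤ t ∧ 1 / (d:ℝ) ≤ L t) ∧ (t - m) % k = r} := by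
      intro t ht
      refine Set.mem_biUnion (Finset.mem_range.mpr (Nat.mod_lt _ hk)) ⟨ht, rfl⟩
    refine Set.Finite.subset (Set.Finite.biUnion (Finset.range k).finite_toSet ?_) hsub
    intro r hr
    exact hcon r (Finset.mem_range.mp hr)
  -- K is eventually periodic with period k
  have hKper : ∀ s, m ≤ s → K (s + k) = K s := by
    intro s hs
    obtain ⟨j, rfl⟩ := Nat.exists_eq_add_of_le hs
    show f^[m + j + k] '' G' = f^[m + j] '' G'
    have e1 : m + j + k = j + (m + k) := by omega
    have e2 : m + j = j + m := by omega
    rw [e1, e2, Function.iterate_add f j (m+k), Function.iterate_add f j m,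
      Set.image_comp, Set.image_comp, hper]
  have hKstab : ∀ j r', K (m + r' + j * k) = K (m + r') := by
    intro j r'
    induction j with
    | zero => simp
    | succ j ih =>
      have e : m + r' + (j+1) * k = (m + r' + j * k) + k := by ring
      rw [e, hKper _ (by omega), ih]
  have hKconst : ∀ t, m ≤ t → (t - m) % k = r → K t = K (m + r) := by
    intro t ht hr
    have e : t = m + r + ((t - m) / k) * k := by
      have h1 := Nat.div_add_mod (t - m) k
      have h2 : k * ((t - m) / k) = ((t - m) / k) * k := Nat.mul_comm _ _
      omega
    rw [e, hKstab]
  -- pigeonhole on left endpoints of big holes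
  have hfin := holes_finite hd (K (m + r))
  have hmaps : Set.MapsTo A {t : ℕ | (m ≤ t ∧ 1 / (d:ℝ) ≤ L t) ∧ (t - m) % k = r}
      {x : AddCircle (1:ℝ) | ∃ y, IsHole (K (m + r)) x y ∧ x ≠ y ∧ 1/(d:ℝ) ≤ alen x y} := by
    rintro t ⟨⟨htm, htL⟩, htr⟩
    refine ⟨B t, ?_, hne t, htL⟩
    have := hhole' t
    rwa [hKconst t htm htr] at this
  obtain ⟨s, hs, t, ht, hst, hAB⟩ := hTinf.exists_ne_map_eq_of_mapsTo hmaps hfin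
  have conclude : ∀ s t : ℕ, (m ≤ s ∧ (s - m) % k = r) → (m ≤ t ∧ (t - m) % k = r) →
      s < t → A s = A t →
      ∃ s p : ℕ, 1 ≤ p ∧
        ({f^[s + p] a, f^[s + p] b} : Set (AddCircle (1:ℝ))) = {f^[s] a, f^[s] b} := by
    rintro s t ⟨hsm, hsr⟩ ⟨htm, htr⟩ hlt hAB
    have h1 : IsHole (K (m + r)) (A s) (B s) := by
      rw [← hKconst s hsm hsr]; exact hhole' s
    have h2 : IsHole (K (m + r)) (A s) (B t) := by
      rw [hAB, ← hKconst t htm htr]; exact hhole' t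
    have hBB : B s = B t := hole_unique h1 h2 (hne s) (hAB ▸ hne t)
    refine ⟨s, t - s, by omega, ?_⟩
    have e : s + (t - s) = t := by omega
    rw [e]
    show ({A t, B t} : Set (AddCircle (1:ℝ))) = {A s, B s}
    rw [← hAB, ← hBB]
  rcases lt_or_gt_of_ne hst with hlt | hlt
  · exact conclude s t ⟨hs.1.1, hs.2⟩ ⟨ht.1.1, ht.2⟩ hlt hAB
  · exact conclude t s ⟨ht.1.1, ht.2⟩ ⟨hs.1.1, hs.2⟩ hlt hAB.symm
end
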